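/- Let n be an odd prime and r₁, s₁, r₂, s₂ nonzero elements of ZMod n with r₁s₂ ≠ r₂s₁. Then every entry of the matrix X(r₁,s₁)* X(r₂,s₂) has absolute value exactly 1/√n. -/

import Mathlib

open Matrix

/-- `ω n = e^{2πi/n}`. -/
noncomputable def omg (n : ℕ) : ℂ := Complex.exp (2 * Real.pi * Complex.I / n)

/-- The cyclic shift matrix: `S_{i,j} = 1` iff `i + 1 = j` in `ZMod n`. -/
noncomputable def Smat (n : ℕ) : Matrix (ZMod n) (ZMod n) ℂ :=
  Matrix.of fun i j => if i + 1 = j then 1 else 0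

/-- The diagonal matrix `R` with `R_{j,j} = ω^j`. -/
noncomputable def Rmat (n : ℕ) : Matrix (ZMod n) (ZMod n) ℂ :=
  Matrix.diagonal fun j => omg n ^ (j.val)

/-- The permutation matrix `Π_s`, with `(Π_s)_{s i, i} = 1`. -/
noncomputable def Pmat (n : ℕ) (s : ZMod n) : Matrix (ZMod n) (ZMod n) ℂ :=
  Matrix.of fun i j => if i = s * j then 1 else 0

/-- The unitary Fourier matrix `F_{k,l} = ω^{kl}/√n`. -/
noncomputable def Fmat (n : ℕ) : Matrix (ZMod n) (ZMod n) ℂ :=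
  Matrix.of fun k l => omg n ^ (k.val * l.val) / Real.sqrt n

/-- The unitary matrix `X(r,s) = Π_s B F` with `B_{k,k} = ω^{-rs·k(k-1)/2}`. -/
noncomputable def Xmat (n : ℕ) [NeZero n] (r s : ZMod n) : Matrix (ZMod n) (ZMod n) ℂ :=
  Pmat n s *
    (Matrix.diagonal fun k : ZMod n =>
      omg n ^ (-((((r * s).val : ℤ)) * (k.val * (k.val - 1) / 2 : ℕ)))) *
    Fmat n

/-!
After the substitution `k = s₁ j` the entry `(c, d)` of `X(r₁,s₁)ᴴ X(r₂,s₂)` is `1/n` times a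
quadratic exponential sum `∑ⱼ ψ(a j² + b j)` over `ZMod n`, whose leading coefficient is
`a = s₁ s₂⁻¹ (r₁ s₂ - r₂ s₁) / 2 ≠ 0`. For such a sum, shifting the summation variable gives
`|∑ⱼ ψ(a j² + b j)|² = ∑ₜ ψ(a t² + b t) ∑ᵧ ψ(2 a t y) = n`, since only `t = 0` survives.
-/

open Finset ZMod

namespace AddChar

variable {F : Type*} [Field F] [Fintype F] {K : Type*} [RCLike K]

lemma norm_sq_sum_quadratic {ψ : AddChar F K} (hψ : ψ.IsPrimitive) (h2 : (2 : F) ≠ 0)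
    {a : F} (ha : a ≠ 0) (b : F) :
    ‖∑ x, ψ (a * x ^ 2 + b * x)‖ ^ 2 = Fintype.card F := by
  classical
  set S := ∑ x, ψ (a * x ^ 2 + b * x)
  have expand : S * (starRingEnd K) S
      = ∑ t, ψ (a * t ^ 2 + b * t) * ∑ y, ψ (y * (2 * a * t)) := by
    simp_rw [mul_sum]
    rw [map_sum, sum_mul_sum, sum_comm]
    conv_rhs => rw [sum_comm]
    refine sum_congr rfl fun y _ => ?_
    rw [← Equiv.sum_comp (Equiv.addRight y)]
    refine sum_congr rfl fun t _ => ?_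
    rw [← map_neg_eq_conj, ← map_add_eq_mul, ← map_add_eq_mul, Equiv.coe_addRight]
    congr 1
    ring
  have collapse : S * (starRingEnd K) S = Fintype.card F := by
    rw [expand, sum_eq_single 0]
    · simp
    · intro t _ ht
      rw [sum_mulShift _ hψ, if_neg (by simp [h2, ha, ht]), Nat.cast_zero, mul_zero]
    · simp
  rw [← RCLike.ofReal_inj (K := K)]
  push_cast
  rw [← RCLike.mul_conj, collapse]

lemma norm_sum_quadratic {ψ : AddChar F K} (hψ : ψ.IsPrimitive) (h2 : (2 : F) ≠ 0)
    {a : F} (ha : a ≠ 0) (b : F) :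
    ‖∑ x, ψ (a * x ^ 2 + b * x)‖ = √(Fintype.card F) := by
  rw [← norm_sq_sum_quadratic hψ h2 ha b, Real.sqrt_sq (norm_nonneg _)]

end AddChar

lemma Nat.two_mul_cast_mul_pred_div_two {R : Type*} [CommRing R] (m : ℕ) :
    2 * ((m * (m - 1) / 2 : ℕ) : R) = m * (m - 1) := by
  rcases m.eq_zero_or_pos with rfl | hm
  · simp
  · rw [← Nat.cast_ofNat, ← Nat.cast_mul, Nat.mul_div_cancel' (Nat.even_mul_pred_self m).two_dvd,
      Nat.cast_mul, Nat.cast_pred hm]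

section Xmat

variable {n : ℕ} [NeZero n]

lemma omg_zpow_eq_stdAddChar (m : ℤ) : omg n ^ m = stdAddChar (m : ZMod n) := by
  rw [stdAddChar_coe, omg, ← Complex.exp_int_mul]
  ring_nf

lemma omg_pow_eq_stdAddChar (m : ℕ) : omg n ^ m = stdAddChar (m : ZMod n) := by
  simpa using omg_zpow_eq_stdAddChar (n := n) m

lemma Pmat_mul_apply_mul {s : ZMod n} (hs : IsUnit s) (M : Matrix (ZMod n) (ZMod n) ℂ)
    (j c : ZMod n) : (Pmat n s * M) (s * j) c = M j c := by
  rw [Matrix.mul_apply, sum_eq_single j]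
  · simp [Pmat]
  · intro i _ hij
    rw [Pmat, of_apply, if_neg (mt hs.mul_left_cancel hij.symm), zero_mul]
  · simp

variable [Fact n.Prime]

lemma Xmat_apply_mul (h2 : (2 : ZMod n) ≠ 0) (r : ZMod n) {s : ZMod n} (hs : s ≠ 0)
    (j c : ZMod n) :
    Xmat n r s (s * j) c = stdAddChar (j * c - r * s * 2⁻¹ * (j * (j - 1))) / √n := by
  have hj : ((j.val * (j.val - 1) / 2 : ℕ) : ZMod n) = 2⁻¹ * (j * (j - 1)) := by
    rw [eq_inv_mul_iff_mul_eq₀ h2, Nat.two_mul_cast_mul_pred_div_two, natCast_zmod_val]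
  rw [Xmat, Matrix.mul_assoc, Pmat_mul_apply_mul hs.isUnit, Matrix.diagonal_mul, Fmat,
    Matrix.of_apply, omg_zpow_eq_stdAddChar, omg_pow_eq_stdAddChar, mul_div_assoc',
    ← AddChar.map_add_eq_mul, Int.cast_neg, Int.cast_mul, Int.cast_natCast, Int.cast_natCast, hj, Nat.cast_mul,
    natCast_zmod_val, natCast_zmod_val, natCast_zmod_val]
  congr 2
  ring

lemma conjTranspose_Xmat_mul_Xmat_apply (h2 : (2 : ZMod n) ≠ 0) {r₁ s₁ r₂ s₂ : ZMod n}
    (hs₁ : s₁ ≠ 0) (hs₂ : s₂ ≠ 0) (c d : ZMod n) :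
    ((Xmat n r₁ s₁)ᴴ * Xmat n r₂ s₂) c d =
      (∑ j, stdAddChar (2⁻¹ * (r₁ * s₁ - r₂ * s₂⁻¹ * s₁ ^ 2) * j ^ 2
        + (-c + 2⁻¹ * (r₂ * s₁ - r₁ * s₁) + s₁ * s₂⁻¹ * d) * j)) / n := by
  rw [Matrix.mul_apply, ← Equiv.sum_comp (Equiv.mulLeft₀ s₁ hs₁), sum_div]
  refine sum_congr rfl fun j _ => ?_
  have hj : s₁ * j = s₂ * (s₂⁻¹ * s₁ * j) := by rw [← mul_assoc, mul_inv_cancel_left₀ hs₂]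
  simp only [Matrix.conjTranspose_apply, Equiv.mulLeft₀_apply]
  rw [Xmat_apply_mul h2 r₁ hs₁, hj, Xmat_apply_mul h2 r₂ hs₂, star_div₀, Complex.star_def, ← AddChar.map_neg_eq_conj,
    Complex.conj_ofReal, div_mul_div_comm, ← AddChar.map_add_eq_mul, ← Complex.ofReal_mul,
    Real.mul_self_sqrt n.cast_nonneg, Complex.ofReal_natCast]
  congr 2
  field_simp
  ring

end Xmat

theorem stmt11_general (n : ℕ) [NeZero n] [Fact (Nat.Prime n)] (hodd : Odd n)
    (r₁ s₁ r₂ s₂ : ZMod n) (hs₁ : s₁ ≠ 0) (hs₂ : s₂ ≠ 0) (h : r₁ * s₂ ≠ r₂ * s₁) :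
    ∀ c d, ‖((Xmat n r₁ s₁)ᴴ * Xmat n r₂ s₂) c d‖ = 1 / Real.sqrt n := by
  intro c d
  have h2 : (2 : ZMod n) ≠ 0 := by
    refine Ring.two_ne_zero ?_
    rw [ZMod.ringChar_zmod_n]
    rintro rfl
    exact Nat.not_odd_iff_even.mpr even_two hodd
  have hα : 2⁻¹ * (r₁ * s₁ - r₂ * s₂⁻¹ * s₁ ^ 2) ≠ 0 := by
    have hfactor : r₁ * s₁ - r₂ * s₂⁻¹ * s₁ ^ 2 = s₁ * s₂⁻¹ * (r₁ * s₂ - r₂ * s₁) := by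
      field_simp
    rw [hfactor]
    exact mul_ne_zero (inv_ne_zero h2)
      (mul_ne_zero (mul_ne_zero hs₁ (inv_ne_zero hs₂)) (sub_ne_zero.mpr h))
  rw [conjTranspose_Xmat_mul_Xmat_apply h2 hs₁ hs₂, norm_div,
    AddChar.norm_sum_quadratic (isPrimitive_stdAddChar n) h2 hα, ZMod.card,
    Complex.norm_natCast, Real.sqrt_div_self']

theorem stmt11 (n : ℕ) [NeZero n] [Fact (Nat.Prime n)] (hodd : Odd n)
    (r₁ s₁ r₂ s₂ : ZMod n) (hr₁ : r₁ ≠ 0) (hs₁ : s₁ ≠ 0) (hr₂ : r₂ ≠ 0)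
    (hs₂ : s₂ ≠ 0) (h : r₁ * s₂ ≠ r₂ * s₁) :
    ∀ c d, ‖((Xmat n r₁ s₁)ᴴ * Xmat n r₂ s₂) c d‖ = 1 / Real.sqrt n :=
  stmt11_general n hodd r₁ s₁ r₂ s₂ hs₁ hs₂ h
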